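/- In every broadcasted party-list election E = (N, C, k, l, A, L) with ballot limit l = 1 and parties P_1, …, P_g, every winning committee W ∈ LV(E) attains the maximum CC-score among all size-k committees: s_CC(A, W) = max_{W' ⊆ C, |W'| = k} s_CC(A, W') = Σ_{i=1}^{min(k, g)} n_i. -/

import Mathlib

/-!
With ballot limit `1` every ballot is a single approved candidate, and consistency with a
broadcasting order forces all voters of a party to cast the same ballot, the party's top
candidate. So the LV-score of a committee counts the voters whose vote it contains, which is at
most its CC-score. A committee of size `k` meets at most `min k g` parties, so its CC-score is at
most `S = n_1 + … + n_{min k g}`; the committee formed by the top candidates of the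
`min k g` largest parties, padded to size `k`, has LV-score at least `S`. An LV-winner `W` hence
satisfies `S ≤ s_LV(W) ≤ s_CC(W) ≤ S`.
-/

open Finset

/-- An election `E = (N, C, k, l, A, L)`: voters form the finite type `V`,
candidates the finite type `C`, `k` is the committee size, `l` the ballot limit,
`A i` is the approval set of voter `i` and `L i` their ballot. -/
structure Election (V C : Type*) [Fintype V] [DecidableEq V] [Fintype C] [DecidableEq C] where
  k : ℕ
  l : ℕ
  A : V → Finset C
  L : V → Finset C
  k_le_card : k ≤ Fintype.card C
  one_le_l : 1 ≤ l
  l_le_k : l ≤ k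
  ballot_card : ∀ i, (L i).card = l
  ballot_sub_approval : ∀ i, l ≤ (A i).card → L i ⊆ A i
  approval_ssub_ballot : ∀ i, (A i).card < l → A i ⊂ L i

variable {V C : Type*} [Fintype V] [DecidableEq V] [Fintype C] [DecidableEq C]

/-- The LV-score of a candidate: the number of voters whose ballot contains it. -/
def sLVc (E : Election V C) (c : C) : ℕ := (univ.filter fun i => c ∈ E.L i).card

/-- The AV-score of a candidate: the number of voters approving it. -/
def sAVc (E : Election V C) (c : C) : ℕ := (univ.filter fun i => c ∈ E.A i).card

/-- The LV-score of a committee. -/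
def sLV (E : Election V C) (W : Finset C) : ℕ := ∑ c ∈ W, sLVc E c

/-- The AV-score of a committee. -/
def sAV (E : Election V C) (W : Finset C) : ℕ := ∑ c ∈ W, sAVc E c

/-- The winning committees of Limited Voting: size-`k` committees maximizing the LV-score. -/
def LVwin (E : Election V C) : Set (Finset C) :=
  {W | W.card = E.k ∧ ∀ W' : Finset C, W'.card = E.k → sLV E W' ≤ sLV E W}

/-- The winning committees of Approval Voting: size-`k` committees maximizing the AV-score. -/
def AVwin (E : Election V C) : Set (Finset C) :=
  {W | W.card = E.k ∧ ∀ W' : Finset C, W'.card = E.k → sAV E W' ≤ sAV E W}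

/-- The Chamberlin–Courant score of a committee: the number of represented voters. -/
def sCC (E : Election V C) (W : Finset C) : ℕ :=
  (univ.filter fun i => (W ∩ E.A i).Nonempty).card

/-- `A` is a party-list profile: approval sets are nonempty and pairwise equal or disjoint. -/
def PartyList (E : Election V C) : Prop :=
  (∀ i, (E.A i).Nonempty) ∧ ∀ i j : V, E.A i = E.A j ∨ E.A i ∩ E.A j = ∅

/-- `E` is consistent with some broadcasting (linear) order on candidates, encoded by an
injective priority function `f` (`f c < f c'` meaning `c ≻ c'`). -/
def Broadcasted (E : Election V C) : Prop :=
  ∃ f : C → ℕ, Function.Injective f ∧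
    ∀ (i : V) (c c' : C), c ∈ E.A i → c' ∈ E.A i → c ∈ E.L i → c' ∉ E.L i → f c < f c'

/-- The number of voters of party `Pj`. -/
def nParty (E : Election V C) (Pj : Finset C) : ℕ := (univ.filter fun i => E.A i = Pj).card

open Function

theorem Antitone.sum_le_sum_filter_val_lt_card {M : Type*} [AddCommMonoid M] [PartialOrder M]
    [IsOrderedAddMonoid M] {g : ℕ} {w : Fin g → M} (hw : Antitone w) (J : Finset (Fin g)) :
    ∑ j ∈ J, w j ≤ ∑ j ∈ univ.filter (fun j : Fin g => (j : ℕ) < #J), w j := by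
  induction J using Finset.induction_on_max with
  | empty => simp
  | insert a s hlt ih =>
    have has : a ∉ s := fun h => (hlt a h).false
    have hs : #s ≤ a := by
      simpa using card_le_card (fun x hx => mem_Iio.2 (hlt x hx) : s ⊆ Iio a)
    have hsplit : univ.filter (fun j : Fin g => (j : ℕ) < #s + 1) =
        insert ⟨#s, by omega⟩ (univ.filter fun j : Fin g => (j : ℕ) < #s) := by
      ext j
      simp only [mem_filter, mem_univ, true_and, mem_insert, Fin.ext_iff]
      omega
    rw [sum_insert has, card_insert_of_notMem has, hsplit, sum_insert (by simp)]
    exact add_le_add (hw (Fin.le_def.2 hs)) ih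

theorem Finset.card_filter_inter_nonempty_le {α ι : Type*} [DecidableEq α] [Fintype ι]
    {P : ι → Finset α} (hP : Pairwise (Disjoint on P)) (W : Finset α) :
    #(univ.filter fun j => (W ∩ P j).Nonempty) ≤ #W :=
  card_le_card_of_forall_subsingleton (fun j c => c ∈ P j)
    (fun j hj => by
      simpa only [mem_filter, mem_univ, true_and, Finset.Nonempty, mem_inter] using hj)
    (fun _ _ j hj j' hj' => by_contra fun hne => disjoint_left.1 (hP hne) hj.2 hj'.2)

section Parties

variable {E : Election V C} {ι : Type*} {P : ι → Finset C}

theorem sLV_eq_sum_card_inter (W : Finset C) :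
    sLV E W = ∑ i, #(W ∩ E.L i) := by
  simp only [sLV, sLVc, card_filter, ← filter_mem_eq_inter]
  exact sum_comm

theorem sLV_le_sCC (hl : E.l = 1) (hA : ∀ i, (E.A i).Nonempty) (W : Finset C) :
    sLV E W ≤ sCC E W := by
  rw [sLV_eq_sum_card_inter, sCC, card_filter]
  refine sum_le_sum fun i _ => ?_
  have hLA : E.L i ⊆ E.A i := E.ballot_sub_approval i (hl ▸ card_pos.2 (hA i))
  have hle : #(W ∩ E.L i) ≤ 1 := hl ▸ E.ballot_card i ▸ card_le_card inter_subset_right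
  split_ifs with h
  · exact hle
  · rw [Nat.le_zero, card_eq_zero, ← not_nonempty_iff_eq_empty]
    exact fun h' => h (h'.mono (inter_subset_inter_left hLA))

theorem Broadcasted.ballot_eq_of_approval_eq (hB : Broadcasted E) {i j : V}
    (hij : E.A i = E.A j) (hi : E.l ≤ #(E.A i)) : E.L i = E.L j := by
  obtain ⟨f, -, hf⟩ := hB
  have hLi : E.L i ⊆ E.A i := E.ballot_sub_approval i hi
  have hLj : E.L j ⊆ E.A i := hij ▸ E.ballot_sub_approval j (hij ▸ hi)
  by_contra hne
  have hcard : #(E.L i) = #(E.L j) := by rw [E.ballot_card, E.ballot_card]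
  obtain ⟨c, hci, hcj⟩ := not_subset.1 fun h => hne (eq_of_subset_of_card_le h hcard.ge)
  obtain ⟨d, hdj, hdi⟩ := not_subset.1 fun h => hne (eq_of_subset_of_card_le h hcard.le).symm
  have := hf i c d (hLi hci) (hLj hdj) hci hdi
  have := hf j d c (hij ▸ hLj hdj) (hij ▸ hLi hci) hdj hcj
  omega

theorem PartyList.pairwise_disjoint (hPL : PartyList E) (hPinj : Injective P)
    (hPrep : ∀ j, ∃ i : V, E.A i = P j) : Pairwise (Disjoint on P) := by
  intro j j' hne
  obtain ⟨i, hi⟩ := hPrep j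
  obtain ⟨i', hi'⟩ := hPrep j'
  rcases hPL.2 i i' with h | h
  · exact absurd (hPinj (hi.symm.trans (h.trans hi'))) hne
  · rw [onFun, ← hi, ← hi', disjoint_iff_inter_eq_empty]
    exact h

theorem sCC_eq_sum_nParty [Fintype ι] [DecidableEq ι] (hPinj : Injective P)
    (hPall : ∀ i : V, ∃ j, E.A i = P j) (W : Finset C) :
    sCC E W = ∑ j ∈ univ.filter (fun j => (W ∩ P j).Nonempty), nParty E (P j) := by
  have hfib : univ.filter (fun i => (W ∩ E.A i).Nonempty) =
      (univ.filter fun j => (W ∩ P j).Nonempty).biUnion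
        (fun j => univ.filter fun i => E.A i = P j) := by
    ext i
    obtain ⟨j, hj⟩ := hPall i
    simp only [mem_filter, mem_univ, true_and, mem_biUnion, hj]
    exact ⟨fun h => ⟨j, h, rfl⟩, fun ⟨j', h, hjj'⟩ => hjj' ▸ h⟩
  rw [sCC, hfib, card_biUnion]
  · rfl
  · intro j _ j' _ hne
    simp only [onFun, disjoint_filter, mem_univ, true_implies]
    exact fun i hij hij' => hne (hPinj (hij.symm.trans hij'))

theorem sCC_le_sum_nParty_filter_lt {g : ℕ} {P : Fin g → Finset C}
    (hPinj : Injective P) (hPall : ∀ i : V, ∃ j, E.A i = P j)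
    (hdisj : Pairwise (Disjoint on P)) (hanti : Antitone fun j => nParty E (P j))
    (W : Finset C) :
    sCC E W ≤ ∑ j ∈ univ.filter (fun j : Fin g => (j : ℕ) < min #W g), nParty E (P j) := by
  rw [sCC_eq_sum_nParty hPinj hPall]
  set J := univ.filter fun j => (W ∩ P j).Nonempty
  have hJ : #J ≤ min #W g :=
    le_min (card_filter_inter_nonempty_le hdisj W) (by simpa using card_le_univ J)
  refine (hanti.sum_le_sum_filter_val_lt_card J).trans (sum_le_sum_of_subset fun j => ?_)
  simp only [mem_filter, mem_univ, true_and]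
  omega

theorem exists_card_eq_sum_nParty_le_sLV (hB : Broadcasted E) (hlA : ∀ i, E.l ≤ #(E.A i))
    (hdisj : Pairwise (Disjoint on P)) (hPrep : ∀ j, ∃ i : V, E.A i = P j)
    (J : Finset ι) (hJ : #J ≤ E.k) :
    ∃ W : Finset C, #W = E.k ∧ ∑ j ∈ J, nParty E (P j) ≤ sLV E W := by
  choose rep hrep using hPrep
  choose top htop using fun j => card_pos.1 ((E.ballot_card (rep j)).symm ▸ E.one_le_l)
  have htopP : ∀ j, top j ∈ P j := fun j =>
    hrep j ▸ E.ballot_sub_approval _ (hlA _) (htop j)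
  have htopinj : Injective top := fun j j' h =>
    by_contra fun hne => disjoint_left.1 (hdisj hne) (htopP j) (h ▸ htopP j')
  have hvoters : ∀ j, nParty E (P j) ≤ sLVc E (top j) := fun j =>
    card_le_card fun i hi => by
      simp only [mem_filter, mem_univ, true_and] at hi ⊢
      rw [hB.ballot_eq_of_approval_eq (hi.trans (hrep j).symm) (hlA i)]
      exact htop j
  obtain ⟨W, hTW, -, hW⟩ := exists_subsuperset_card_eq (subset_univ (J.image top))
    (card_image_le.trans hJ) (by simpa using E.k_le_card)
  refine ⟨W, hW, ?_⟩
  calc ∑ j ∈ J, nParty E (P j)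
      ≤ ∑ j ∈ J, sLVc E (top j) := sum_le_sum fun j _ => hvoters j
    _ = ∑ c ∈ J.image top, sLVc E c := (sum_image fun _ _ _ _ h => htopinj h).symm
    _ ≤ sLV E W := sum_le_sum_of_subset hTW

end Parties

/-- In every broadcasted party-list election with ballot limit `l = 1` and
parties `P_1, …, P_g` (indexed with weakly decreasing popularities), every LV-winning
committee attains the maximum CC-score among all size-`k` committees, which equals
`Σ_{i=1}^{min(k, g)} n_i`. -/
theorem stmt4 (E : Election V C) (hPL : PartyList E) (hB : Broadcasted E)
    (hl : E.l = 1)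
    (g : ℕ) (P : Fin g → Finset C)
    (hPinj : Function.Injective P)
    (hPall : ∀ i : V, ∃ j, E.A i = P j)
    (hPrep : ∀ j, ∃ i : V, E.A i = P j)
    (hanti : ∀ j j' : Fin g, j ≤ j' → nParty E (P j') ≤ nParty E (P j)) :
    ∀ W ∈ LVwin E,
      (∀ W' : Finset C, W'.card = E.k → sCC E W' ≤ sCC E W) ∧
      sCC E W = ∑ j ∈ univ.filter (fun j : Fin g => (j : ℕ) < min E.k g),
        nParty E (P j) := by
  set S := ∑ j ∈ univ.filter (fun j : Fin g => (j : ℕ) < min E.k g), nParty E (P j)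
  have hdisj := hPL.pairwise_disjoint hPinj hPrep
  have hupper : ∀ W' : Finset C, W'.card = E.k → sCC E W' ≤ S := fun W' hW' => by
    simpa only [hW'] using sCC_le_sum_nParty_filter_lt hPinj hPall hdisj hanti W'
  have hcardS : #(univ.filter fun j : Fin g => (j : ℕ) < min E.k g) ≤ E.k := by
    rw [Fin.card_filter_val_lt]
    omega
  obtain ⟨W₀, hW₀k, hW₀⟩ := exists_card_eq_sum_nParty_le_sLV hB
    (fun i => hl ▸ card_pos.2 (hPL.1 i)) hdisj hPrep _ hcardS
  rintro W ⟨hWk, hWmax⟩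
  have hlower : S ≤ sCC E W := hW₀.trans ((hWmax W₀ hW₀k).trans (sLV_le_sCC hl hPL.1 W))
  exact ⟨fun W' hW' => (hupper W' hW').trans hlower, (hupper W hWk).antisymm hlower⟩
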